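/- arXiv:1904.06720 — 5 statements merged into one kernel-verified Lean document; each statement's English description precedes it below -/
import Mathlib

section
/- If π is a torsion-free group in which the centralizer of every nontrivial element is infinite cyclic, then for every nontrivial a ∈ π and every nonzero integer k, Z(a) = Z(a^k). -/
/-- The December 2024 Mathlib definition of `Monoid.IsTorsionFree` (removed since). -/
def Monoid.IsTorsionFree (G : Type*) [Monoid G] : Prop :=
  ∀ g : G, g ≠ 1 → ¬IsOfFinOrder g

theorem Monoid.IsTorsionFree.zpow_ne_one {G : Type*} [Group G] (hG : Monoid.IsTorsionFree G)
    {a : G} (ha : a ≠ 1) {k : ℤ} (hk : k ≠ 0) : a ^ k ≠ 1 :=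
  fun h ↦ hG a ha (isOfFinOrder_iff_zpow_eq_one.2 ⟨k, hk, h⟩)

namespace Subgroup

variable {G : Type*} [Group G]

theorem centralizer_le_centralizer_zpow (a : G) (k : ℤ) :
    centralizer {a} ≤ centralizer {a ^ k} :=
  fun _ hx ↦ mem_centralizer_singleton_iff.2
    ((Commute.zpow_right (mem_centralizer_singleton_iff.1 hx) k).eq)

theorem le_centralizer_singleton_of_mem {H : Subgroup G} [IsMulCommutative H] {a : G}
    (ha : a ∈ H) : H ≤ centralizer {a} :=
  (le_centralizer H).trans (centralizer_le (Set.singleton_subset_iff.2 ha))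

theorem centralizer_eq_centralizer_zpow_of_isMulCommutative (a : G) (k : ℤ)
    [IsMulCommutative (centralizer {a ^ k})] :
    centralizer {a} = centralizer {a ^ k} :=
  (centralizer_le_centralizer_zpow a k).antisymm <|
    le_centralizer_singleton_of_mem <| mem_centralizer_singleton_iff.2 (Commute.self_zpow a k).eq

end Subgroup

theorem centralizer_eq_centralizer_zpow {π : Type*} [Group π]
    (hTF : Monoid.IsTorsionFree π)
    (hcyc : ∀ g : π, g ≠ 1 → ∃ t : π, Subgroup.centralizer {g} = Subgroup.zpowers t)
    (a : π) (ha : a ≠ 1) (k : ℤ) (hk : k ≠ 0) :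
    Subgroup.centralizer {a} = Subgroup.centralizer {a ^ k} := by
  obtain ⟨t, ht⟩ := hcyc (a ^ k) (hTF.zpow_ne_one ha hk)
  have : IsMulCommutative (Subgroup.centralizer {a ^ k}) := ht ▸ inferInstance
  exact Subgroup.centralizer_eq_centralizer_zpow_of_isMulCommutative a k
end

section
/- In a torsion-free group π in which the centralizer of every nontrivial element is infinite cyclic, if x² commutes with a nontrivial element a, then x commutes with a; that is, x² ∈ Z(a) implies x ∈ Z(a). -/
/-
If `x ≠ 1` then `x² ≠ 1` by torsion-freeness, so the centralizer of `x²` is cyclic and in particular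
abelian. It contains both `x` and `a`, hence these commute.
-/

open Subgroup

theorem Monoid.IsTorsionFree.pow_ne_one {G : Type*} [Monoid G] (h : Monoid.IsTorsionFree G)
    {x : G} (hx : x ≠ 1) {n : ℕ} (hn : n ≠ 0) : x ^ n ≠ 1 :=
  fun hxn => h x hx (isOfFinOrder_iff_pow_eq_one.mpr ⟨n, Nat.pos_of_ne_zero hn, hxn⟩)

theorem Subgroup.mem_centralizer_of_pow_mem {G : Type*} [Group G] {a x : G} {n : ℕ}
    [IsMulCommutative (centralizer {x ^ n})] (hx : x ^ n ∈ centralizer {a}) :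
    x ∈ centralizer {a} := by
  have hxc : x ∈ centralizer {x ^ n} :=
    mem_centralizer_singleton_iff.mpr (Commute.self_pow x n).eq
  have hac : a ∈ centralizer {x ^ n} :=
    mem_centralizer_singleton_iff.mpr (mem_centralizer_singleton_iff.mp hx).symm
  exact mem_centralizer_singleton_iff.mpr (setLike_mul_comm hxc hac)

theorem sq_mem_centralizer_imp_mem_general {π : Type*} [Group π]
    (hTF : Monoid.IsTorsionFree π)
    (hcyc : ∀ g : π, g ≠ 1 → ∃ t : π, Subgroup.centralizer {g} = Subgroup.zpowers t)
    (a x : π) (hx : x ^ 2 ∈ Subgroup.centralizer {a}) :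
    x ∈ Subgroup.centralizer {a} := by
  rcases eq_or_ne x 1 with rfl | hx1
  · exact one_mem _
  obtain ⟨t, ht⟩ := hcyc (x ^ 2) (hTF.pow_ne_one hx1 two_ne_zero)
  have : IsMulCommutative (centralizer {x ^ 2}) := ht ▸ inferInstance
  exact mem_centralizer_of_pow_mem hx

theorem sq_mem_centralizer_imp_mem {π : Type*} [Group π]
    (hTF : Monoid.IsTorsionFree π)
    (hcyc : ∀ g : π, g ≠ 1 → ∃ t : π, Subgroup.centralizer {g} = Subgroup.zpowers t)
    (a x : π) (ha : a ≠ 1) (hx : x ^ 2 ∈ Subgroup.centralizer {a}) :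
    x ∈ Subgroup.centralizer {a} :=
  sq_mem_centralizer_imp_mem_general hTF hcyc a x hx
end

section
/- Let π be a torsion-free group with all centralizers of nontrivial elements infinite cyclic, and for γ, b ∈ π with b ≠ e set H_{γ,b} = (γ,e) Δ(Z(b)) (γ⁻¹,e) ≤ π × π. Then for any γ, α ∈ π and nontrivial b, c ∈ π, either H_{γ,b} = H_{α,c} or H_{γ,b} ∩ H_{α,c} is the trivial subgroup. -/
/-- The diagonal homomorphism `π → π × π`. -/
def diagHom (π : Type*) [Group π] : π →* π × π :=
  (MonoidHom.id π).prod (MonoidHom.id π)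

/-- The conjugate `g S g⁻¹` of a subgroup `S` by an element `g`. -/
def conjSub {G : Type*} [Group G] (g : G) (S : Subgroup G) : Subgroup G :=
  S.map (MulAut.conj g).toMonoidHom

/-- The subgroup `H_{γ,b} = (γ,e) Δ(Z(b)) (γ⁻¹,e)` of `π × π`. -/
def Hsub {π : Type*} [Group π] (γ b : π) : Subgroup (π × π) :=
  conjSub ((γ, (1 : π)) : π × π) ((Subgroup.centralizer {b}).map (diagHom π))


/-!
A nontrivial element `(γ z γ⁻¹, z)` common to `H_{γ,b}` and `H_{α,c}` forces `Z(b) = Z(z) = Z(c)`,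
since abelian centralizers make commuting with a nontrivial element a transitive relation.
Moreover `γ z γ⁻¹ = α z α⁻¹` puts `α⁻¹ γ` in `Z(z) = Z(b)`, an abelian group, so conjugating
`Δ(Z(b))` by `(γ, e)` or by `(α, e)` gives the same subgroup.
-/

section

open Subgroup

variable {π : Type*} [Group π]

lemma mem_Hsub {γ b : π} {p : π × π} :
    p ∈ Hsub γ b ↔ ∃ z ∈ centralizer {b}, p = (γ * z * γ⁻¹, z) := by
  simp only [Hsub, conjSub, mem_map, MulEquiv.coe_toMonoidHom, MulAut.conj_apply, diagHom,
    MonoidHom.prod_apply, MonoidHom.id_apply]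
  constructor
  · rintro ⟨q, ⟨z, hz, rfl⟩, rfl⟩
    exact ⟨z, hz, by simp [mul_assoc]⟩
  · rintro ⟨z, hz, rfl⟩
    exact ⟨(z, z), ⟨z, hz, rfl⟩, by simp [mul_assoc]⟩

lemma conj_eq_conj_iff_commute {γ α z : π} :
    γ * z * γ⁻¹ = α * z * α⁻¹ ↔ Commute (α⁻¹ * γ) z := by
  constructor
  · intro h
    calc α⁻¹ * γ * z = α⁻¹ * (γ * z * γ⁻¹) * γ := by group
      _ = z * (α⁻¹ * γ) := by rw [h]; group
  · intro h
    calc γ * z * γ⁻¹ = α * (α⁻¹ * γ * z) * γ⁻¹ := by group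
      _ = α * z * α⁻¹ := by rw [h.eq]; group

lemma Hsub_eq_of_forall_commute {γ α b : π}
    (h : ∀ z ∈ centralizer {b}, Commute (α⁻¹ * γ) z) : Hsub γ b = Hsub α b := by
  ext p
  simp only [mem_Hsub]
  refine exists_congr fun z => and_congr_right fun hz => ?_
  rw [conj_eq_conj_iff_commute.2 (h z hz)]

lemma centralizer_le_of_mem_centralizer {a z : π} [IsMulCommutative (centralizer {a})]
    (hz : z ∈ centralizer {a}) : centralizer {a} ≤ centralizer {z} := fun _ hg =>
  mem_centralizer_singleton_iff.2 (setLike_mul_comm hg hz)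

lemma centralizer_eq_of_mem_centralizer {a z : π} [IsMulCommutative (centralizer {a})]
    [IsMulCommutative (centralizer {z})] (hz : z ∈ centralizer {a}) :
    centralizer {a} = centralizer {z} :=
  le_antisymm (centralizer_le_of_mem_centralizer hz) <| centralizer_le_of_mem_centralizer <|
    mem_centralizer_singleton_iff.2 (mem_centralizer_singleton_iff.1 hz).symm

lemma Hsub_eq_of_ne_one_mem_inf
    (hZ : ∀ g : π, g ≠ 1 → IsMulCommutative (centralizer {g}))
    {γ α b c : π} (hb : b ≠ 1) (hc : c ≠ 1) {p : π × π}
    (hp : p ∈ Hsub γ b ⊓ Hsub α c) (hp1 : p ≠ 1) : Hsub γ b = Hsub α c := by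
  obtain ⟨hpb, hpc⟩ := hp
  obtain ⟨z, hzb, rfl⟩ := mem_Hsub.1 hpb
  obtain ⟨w, hwc, hzw⟩ := mem_Hsub.1 hpc
  obtain ⟨hconj, rfl⟩ := Prod.ext_iff.1 hzw
  have hz1 : z ≠ 1 := by
    rintro rfl
    exact hp1 (by simp)
  have := hZ b hb
  have := hZ c hc
  have := hZ z hz1
  have hZb := centralizer_eq_of_mem_centralizer hzb
  have hZc := centralizer_eq_of_mem_centralizer hwc
  have hu : α⁻¹ * γ ∈ centralizer {b} := by
    rw [hZb, mem_centralizer_singleton_iff]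
    exact (conj_eq_conj_iff_commute.1 hconj).eq
  calc Hsub γ b = Hsub α b := Hsub_eq_of_forall_commute fun z' hz' =>
        setLike_mul_comm hu hz'
    _ = Hsub α c := by rw [Hsub, Hsub, hZb, hZc]

end

theorem Hsub_eq_or_inter_trivial_general {π : Type*} [Group π]
    (hcyc : ∀ g : π, g ≠ 1 → ∃ t : π, Subgroup.centralizer {g} = Subgroup.zpowers t)
    (γ α b c : π) (hb : b ≠ 1) (hc : c ≠ 1) :
    Hsub γ b = Hsub α c ∨ Hsub γ b ⊓ Hsub α c = ⊥ := by
  have hZ (g : π) (hg : g ≠ 1) : IsMulCommutative (Subgroup.centralizer {g}) := by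
    obtain ⟨t, ht⟩ := hcyc g hg
    rw [ht]
    infer_instance
  obtain hbot | ⟨p, hp, hp1⟩ := (Hsub γ b ⊓ Hsub α c).bot_or_exists_ne_one
  · exact Or.inr hbot
  · exact Or.inl (Hsub_eq_of_ne_one_mem_inf hZ hb hc hp hp1)

theorem Hsub_eq_or_inter_trivial {π : Type*} [Group π]
    (hTF : Monoid.IsTorsionFree π)
    (hcyc : ∀ g : π, g ≠ 1 → ∃ t : π, Subgroup.centralizer {g} = Subgroup.zpowers t)
    (γ α b c : π) (hb : b ≠ 1) (hc : c ≠ 1) :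
    Hsub γ b = Hsub α c ∨ Hsub γ b ⊓ Hsub α c = ⊥ :=
  Hsub_eq_or_inter_trivial_general hcyc γ α b c hb hc
end

section
/- Let π be a torsion-free group with all centralizers of nontrivial elements infinite cyclic, and let a, b be nontrivial elements. If (x, y) Δ(Z(a)) (x, y)⁻¹ = Δ(Z(b)) for some x, y ∈ π, then a and b are weakly conjugate, i.e. there exist nonzero integers k, ℓ and z ∈ π with a^k = z b^ℓ z⁻¹. -/
/-- Weak conjugacy: `a ~ b` iff some nonzero powers `a^k` and `b^ℓ` are conjugate. -/
def WeaklyConjugate {π : Type*} [Group π] (a b : π) : Prop :=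
  ∃ k ℓ : ℤ, k ≠ 0 ∧ ℓ ≠ 0 ∧ ∃ x : π, a ^ k = x * b ^ ℓ * x⁻¹

/-! The first coordinate of `(x, y) Δ(s) (x, y)⁻¹` is `x s x⁻¹`, so `x Z(a) x⁻¹ ⊆ Z(b)`; in
particular `x a x⁻¹` and `b` both lie in the cyclic group `Z(b) = ⟨t⟩`. Writing them as `t^m` and
`t^n` (with `m, n ≠ 0` as both are nontrivial) gives `(x a x⁻¹)^n = t^(mn) = b^m`. -/

theorem conj_mem_of_conjSub_map_diagHom_eq {G : Type*} [Group G] {S T : Subgroup G} {x y : G}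
    (h : conjSub ((x, y) : G × G) (S.map (diagHom G)) = T.map (diagHom G)) {s : G} (hs : s ∈ S) :
    x * s * x⁻¹ ∈ T := by
  have hmem : ((x * s * x⁻¹, y * s * y⁻¹) : G × G) ∈ T.map (diagHom G) :=
    h ▸ ⟨(s, s), ⟨s, hs, rfl⟩, rfl⟩
  obtain ⟨g, hgT, hg⟩ := hmem
  have hgx : g = x * s * x⁻¹ := congrArg Prod.fst hg
  exact hgx ▸ hgT

theorem weaklyConjugate_of_mem_zpowers {G : Type*} [Group G] {a b t : G} (ha : a ≠ 1)
    (hb : b ≠ 1) (hat : a ∈ Subgroup.zpowers t) (hbt : b ∈ Subgroup.zpowers t) :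
    WeaklyConjugate a b := by
  obtain ⟨m, rfl⟩ := hat
  obtain ⟨n, rfl⟩ := hbt
  refine ⟨n, m, ?_, ?_, 1, ?_⟩
  · rintro rfl
    exact hb (zpow_zero t)
  · rintro rfl
    exact ha (zpow_zero t)
  · simp only [← zpow_mul, one_mul, inv_one, mul_one, mul_comm]

theorem WeaklyConjugate.of_conj_left {G : Type*} [Group G] {a b : G} (x : G)
    (h : WeaklyConjugate (x * a * x⁻¹) b) : WeaklyConjugate a b := by
  obtain ⟨k, ℓ, hk, hℓ, z, hz⟩ := h
  refine ⟨k, ℓ, hk, hℓ, x⁻¹ * z, ?_⟩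
  rw [conj_zpow] at hz
  calc a ^ k = x⁻¹ * (x * a ^ k * x⁻¹) * x := by group
    _ = x⁻¹ * z * b ^ ℓ * (x⁻¹ * z)⁻¹ := by rw [hz]; group

theorem weaklyConjugate_of_conj_diag_centralizer_eq_general {π : Type*} [Group π]
    (hcyc : ∀ g : π, g ≠ 1 → ∃ t : π, Subgroup.centralizer {g} = Subgroup.zpowers t)
    (a b : π) (ha : a ≠ 1) (hb : b ≠ 1) (x y : π)
    (h : conjSub ((x, y) : π × π) ((Subgroup.centralizer {a}).map (diagHom π)) =
      (Subgroup.centralizer {b}).map (diagHom π)) :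
    WeaklyConjugate a b := by
  have hxa : x * a * x⁻¹ ∈ Subgroup.centralizer {b} :=
    conj_mem_of_conjSub_map_diagHom_eq h (Subgroup.mem_centralizer_singleton_iff.mpr rfl)
  have hbb : b ∈ Subgroup.centralizer {b} := Subgroup.mem_centralizer_singleton_iff.mpr rfl
  obtain ⟨t, ht⟩ := hcyc b hb
  rw [ht] at hxa hbb
  exact (weaklyConjugate_of_mem_zpowers (conj_eq_one_iff.not.mpr ha) hb hxa hbb).of_conj_left x

theorem weaklyConjugate_of_conj_diag_centralizer_eq {π : Type*} [Group π]
    (hTF : Monoid.IsTorsionFree π)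
    (hcyc : ∀ g : π, g ≠ 1 → ∃ t : π, Subgroup.centralizer {g} = Subgroup.zpowers t)
    (a b : π) (ha : a ≠ 1) (hb : b ≠ 1) (x y : π)
    (h : conjSub ((x, y) : π × π) ((Subgroup.centralizer {a}).map (diagHom π)) =
      (Subgroup.centralizer {b}).map (diagHom π)) :
    WeaklyConjugate a b :=
  weaklyConjugate_of_conj_diag_centralizer_eq_general hcyc a b ha hb x y h
end

section
/- Let π be a torsion-free group in which all centralizers of nontrivial elements are infinite cyclic, and let a ∈ π be nontrivial. Then the stabilizer in π × π of the unordered pair {v, v_a} of cosets of the diagonal (v = Δ(π), v_a = (a, e)Δ(π)) is exactly Δ(Z(a)): an element (x, y) stabilizes the pair if and only if x = y and x ∈ Z(a). -/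
/-- The coset `v_γ = (γ, e)Δ(π)` of the diagonal subgroup. -/
def cosetV {π : Type*} [Group π] (γ : π) : (π × π) ⧸ (diagHom π).range :=
  QuotientGroup.mk ((γ, (1 : π)) : π × π)

/-!
An element `(x, y)` sends `v_γ` to `v_δ` exactly when `x γ y⁻¹ = δ`. Fixing both `v` and `v_a`
thus means `x = y ∈ Z(a)`, while swapping them means `y = x a` and `x a⁻¹ x⁻¹ = a`, i.e. `a` is
conjugate to its inverse. The latter is impossible: `x²` then commutes with `a`, so `x` and `a`
both lie in the abelian group `Z(x²)`, whence `a = a⁻¹`, contradicting torsion-freeness.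
-/

section Group

variable {G : Type*} [Group G]

lemma smul_cosetV_eq_cosetV_iff (x y γ δ : G) :
    ((x, y) : G × G) • cosetV γ = cosetV δ ↔ x * γ * y⁻¹ = δ := by
  rw [cosetV, cosetV, MulAction.Quotient.smul_mk, QuotientGroup.eq]
  constructor
  · rintro ⟨g, hg⟩
    obtain ⟨hg₁, hg₂⟩ := Prod.ext_iff.mp hg
    simp only [diagHom, MonoidHom.prod_apply, MonoidHom.id_apply, Prod.fst_mul, Prod.snd_mul,
      Prod.fst_inv, Prod.snd_inv, smul_eq_mul, mul_one] at hg₁ hg₂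
    rw [hg₂] at hg₁
    rw [hg₁]
    group
  · intro h
    exact ⟨y⁻¹, by simp [diagHom, ← h, mul_assoc]⟩

lemma not_isConj_inv_self (hsq : ∀ g : G, g ^ 2 = 1 → g = 1)
    (hcomm : ∀ g : G, g ≠ 1 → IsMulCommutative (Subgroup.centralizer {g}))
    {a : G} (ha : a ≠ 1) : ¬IsConj a a⁻¹ := by
  intro hconj
  obtain ⟨x, hx⟩ := isConj_iff.mp hconj
  have hx_sq : Commute (x ^ 2) a := by
    refine mul_inv_eq_iff_eq_mul.mp ?_
    calc x ^ 2 * a * (x ^ 2)⁻¹ = x * (x * a * x⁻¹) * x⁻¹ := by rw [sq]; group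
      _ = x * a⁻¹ * x⁻¹ := by rw [hx]
      _ = (x * a * x⁻¹)⁻¹ := by group
      _ = a := by rw [hx, inv_inv]
  have hxa : Commute x a := by
    rcases eq_or_ne (x ^ 2) 1 with h | h
    · rw [hsq x h]
      exact Commute.one_left a
    · have := hcomm _ h
      exact setLike_mul_comm (s := Subgroup.centralizer {x ^ 2})
        (Subgroup.mem_centralizer_singleton_iff.mpr (Commute.self_pow x 2).eq)
        (Subgroup.mem_centralizer_singleton_iff.mpr hx_sq.symm.eq)
  have ha_inv : a⁻¹ = a := by rw [← hx, hxa.eq, mul_inv_cancel_right]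
  exact ha (hsq a (by rw [sq]; exact inv_eq_iff_mul_eq_one.mp ha_inv))

end Group

theorem stabilizer_pair_eq_diag_centralizer {π : Type*} [Group π]
    (hTF : ∀ g : π, g ≠ 1 → ¬IsOfFinOrder g)
    (hcyc : ∀ g : π, g ≠ 1 → ∃ t : π, Subgroup.centralizer {g} = Subgroup.zpowers t)
    (a : π) (ha : a ≠ 1) (x y : π) :
    ((((x, y) : π × π) • cosetV (1 : π) = cosetV (1 : π) ∧
        ((x, y) : π × π) • cosetV a = cosetV a) ∨
      (((x, y) : π × π) • cosetV (1 : π) = cosetV a ∧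
        ((x, y) : π × π) • cosetV a = cosetV (1 : π))) ↔
      (x = y ∧ x ∈ Subgroup.centralizer {a}) := by
  have hsq : ∀ g : π, g ^ 2 = 1 → g = 1 := fun g hg =>
    not_not.mp fun hg₁ => hTF g hg₁ (isOfFinOrder_iff_pow_eq_one.mpr ⟨2, two_pos, hg⟩)
  have hcomm : ∀ g : π, g ≠ 1 → IsMulCommutative (Subgroup.centralizer {g}) := fun g hg => by
    obtain ⟨t, ht⟩ := hcyc g hg
    rw [ht]
    infer_instance
  simp only [smul_cosetV_eq_cosetV_iff, mul_one, mul_inv_eq_one,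
    Subgroup.mem_centralizer_singleton_iff]
  constructor
  · rintro (⟨rfl, hx⟩ | ⟨hxy, rfl⟩)
    · exact ⟨rfl, mul_inv_eq_iff_eq_mul.mp hx⟩
    · refine absurd (isConj_iff.mpr ⟨x, ?_⟩).symm (not_isConj_inv_self hsq hcomm ha)
      simpa only [mul_inv_rev, mul_assoc] using hxy
  · rintro ⟨rfl, hx⟩
    exact Or.inl ⟨rfl, mul_inv_eq_iff_eq_mul.mpr hx⟩
end
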